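/- Moments of the restricted jump-adapted time step: For every integer p ≥ 2 there exists a constant K_p > 0, depending only on p and independent of λ and h, such that for all λ > 0 and h > 0, if δ is exponentially distributed with rate λ and θ = min(δ, h), then E[θ^p] ≤ K_p · (1 − e^{−λh}(1 + λh))/λ^p. Equivalently, ∫₀^h x^p λ e^{−λx} dx + h^p e^{−λh} ≤ K_p (1 − e^{−λh}(1+λh))/λ^p. -/

import Mathlib

open Real MeasureTheory intervalIntegral Set
open scoped Nat

private lemma expderiv (lam x : ℝ) :
    HasDerivAt (fun y : ℝ => -Real.exp (-lam * y)) (lam * Real.exp (-lam * x)) x := by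
  have h1 : HasDerivAt (fun y : ℝ => -lam * y) (-lam) x := by
    simpa using (hasDerivAt_id x).const_mul (-lam)
  have := h1.exp.neg
  simpa [mul_comm, Pi.neg_def] using this

/-- Integration by parts identity. -/
private lemma lemA (p : ℕ) (hp : 1 ≤ p) (lam h : ℝ) :
    (∫ x in (0:ℝ)..h, x ^ p * (lam * Real.exp (-lam * x))) + h ^ p * Real.exp (-lam * h)
      = ∫ x in (0:ℝ)..h, (p : ℝ) * x ^ (p - 1) * Real.exp (-lam * x) := by
  have hu : ∀ x ∈ uIcc (0:ℝ) h, HasDerivAt (fun y : ℝ => y ^ p)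
      ((p : ℝ) * x ^ (p - 1)) x := fun x _ => hasDerivAt_pow p x
  have hv : ∀ x ∈ uIcc (0:ℝ) h, HasDerivAt (fun y : ℝ => -Real.exp (-lam * y))
      (lam * Real.exp (-lam * x)) x := fun x _ => expderiv lam x
  have hu' : IntervalIntegrable (fun x : ℝ => (p : ℝ) * x ^ (p - 1)) volume 0 h :=
    (by continuity : Continuous fun x : ℝ => (p : ℝ) * x ^ (p - 1)).intervalIntegrable 0 h
  have hv' : IntervalIntegrable (fun x : ℝ => lam * Real.exp (-lam * x)) volume 0 h :=
    (by continuity : Continuous fun x : ℝ => lam * Real.exp (-lam * x)).intervalIntegrable 0 h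
  have key := intervalIntegral.integral_mul_deriv_eq_deriv_mul hu hv hu' hv'
  have h0 : (0:ℝ) ^ p = 0 := zero_pow (by omega)
  rw [key, h0]
  simp only [mul_neg, intervalIntegral.integral_neg]
  ring

/-- FTC identity for the right-hand side. -/
private lemma lemB (lam h : ℝ) :
    1 - Real.exp (-lam * h) * (1 + lam * h)
      = ∫ x in (0:ℝ)..h, lam ^ 2 * x * Real.exp (-lam * x) := by
  have hd : ∀ x ∈ uIcc (0:ℝ) h,
      HasDerivAt (fun y : ℝ => -(Real.exp (-lam * y) * (1 + lam * y)))
        (lam ^ 2 * x * Real.exp (-lam * x)) x := by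
    intro x _
    have h1 : HasDerivAt (fun y : ℝ => Real.exp (-lam * y)) (-lam * Real.exp (-lam * x)) x := by
      simpa [mul_comm] using ((hasDerivAt_id x).const_mul (-lam)).exp
    have h2 : HasDerivAt (fun y : ℝ => 1 + lam * y) lam x := by
      simpa using ((hasDerivAt_id x).const_mul lam).const_add 1
    have := (h1.mul h2).neg
    simp only [Pi.neg_def, Pi.mul_apply] at this
    refine this.congr_deriv ?_
    ring
  have hint : IntervalIntegrable (fun x : ℝ => lam ^ 2 * x * Real.exp (-lam * x)) volume 0 h :=
    (by continuity : Continuous fun x : ℝ => lam ^ 2 * x * Real.exp (-lam * x)).intervalIntegrable 0 h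
  rw [intervalIntegral.integral_eq_sub_of_hasDerivAt hd hint]
  simp
  ring

/-- Moments of the restricted jump-adapted time step: for every integer `p ≥ 2` there is a
constant `K_p > 0`, independent of `λ` and `h`, such that for all `λ, h > 0`, if `δ` is
exponentially distributed with rate `λ` and `θ = min(δ,h)` then
`E[θ^p] ≤ K_p (1 - e^{-λh}(1+λh))/λ^p`; via the density this reads
`∫₀ʰ x^p λ e^{-λx} dx + h^p e^{-λh} ≤ K_p (1 - e^{-λh}(1+λh))/λ^p`. -/
theorem moments_restricted_jump_adapted_step (p : ℕ) (hp : 2 ≤ p) :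
    ∃ K : ℝ, 0 < K ∧ ∀ lam h : ℝ, 0 < lam → 0 < h →
      (∫ x in (0:ℝ)..h, x ^ p * (lam * Real.exp (-lam * x))) + h ^ p * Real.exp (-lam * h)
        ≤ K * (1 - Real.exp (-lam * h) * (1 + lam * h)) / lam ^ p := by
  obtain ⟨q, rfl⟩ : ∃ q, p = q + 2 := ⟨p - 2, by omega⟩
  refine ⟨(4 * (q + 2)! : ℝ), by positivity, ?_⟩
  intro lam h hlam hh
  rw [lemA (q + 2) (by omega) lam h]
  have hq1 : q + 2 - 1 = q + 1 := rfl
  rw [hq1]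
  by_cases hcase : lam * h ≤ 1
  · -- small λh: pointwise comparison
    have hint1 : IntervalIntegrable
        (fun x : ℝ => ((q + 2 : ℕ) : ℝ) * x ^ (q + 1) * Real.exp (-lam * x)) volume 0 h :=
      (by continuity : Continuous fun x : ℝ =>
        ((q + 2 : ℕ) : ℝ) * x ^ (q + 1) * Real.exp (-lam * x)).intervalIntegrable 0 h
    have hint2 : IntervalIntegrable
        (fun x : ℝ => (4 * (q + 2)! / lam ^ (q + 2)) * (lam ^ 2 * x * Real.exp (-lam * x)))
        volume 0 h :=
      (by continuity : Continuous fun x : ℝ =>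
        (4 * (q + 2)! / lam ^ (q + 2)) * (lam ^ 2 * x * Real.exp (-lam * x))).intervalIntegrable 0 h
    calc (∫ x in (0:ℝ)..h, ((q + 2 : ℕ) : ℝ) * x ^ (q + 1) * Real.exp (-lam * x))
        ≤ ∫ x in (0:ℝ)..h,
            (4 * (q + 2)! / lam ^ (q + 2)) * (lam ^ 2 * x * Real.exp (-lam * x)) := by
          apply intervalIntegral.integral_mono_on hh.le hint1 hint2
          intro x hx
          obtain ⟨hx0, hxh⟩ := hx
          have hlx : lam * x ≤ 1 :=
            le_trans (by nlinarith) hcase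
          have hpow : (lam * x) ^ q ≤ 1 :=
            pow_le_one₀ (by positivity) hlx
          have hfac : ((q + 2 : ℕ) : ℝ) ≤ 4 * (q + 2)! := by
            have h' : ((q + 2 : ℕ) : ℝ) ≤ ((q + 2)! : ℝ) := by
              exact_mod_cast Nat.self_le_factorial (q + 2)
            have h'' : (0:ℝ) ≤ ((q + 2)! : ℝ) := by positivity
            linarith
          have key : ((q + 2 : ℕ) : ℝ) * x ^ (q + 1) * lam ^ (q + 2)
              ≤ 4 * (q + 2)! * (lam ^ 2 * x) := by
            have e1 : ((q + 2 : ℕ) : ℝ) * x ^ (q + 1) * lam ^ (q + 2)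
                = ((q + 2 : ℕ) : ℝ) * (lam * x) ^ q * (lam ^ 2 * x) := by
              rw [mul_pow]; ring
            rw [e1]
            have hx2 : 0 ≤ lam ^ 2 * x := by positivity
            have h2 : ((q + 2 : ℕ) : ℝ) * (lam * x) ^ q ≤ 4 * (q + 2)! := by
              nlinarith [hpow, hfac, Nat.cast_nonneg (q + 2) (α := ℝ)]
            exact mul_le_mul_of_nonneg_right h2 hx2
          rw [div_mul_eq_mul_div, le_div_iff₀ (pow_pos hlam (q + 2))]
          calc ((q + 2 : ℕ) : ℝ) * x ^ (q + 1) * Real.exp (-lam * x) * lam ^ (q + 2)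
              = (((q + 2 : ℕ) : ℝ) * x ^ (q + 1) * lam ^ (q + 2)) * Real.exp (-lam * x) := by
                ring
            _ ≤ (4 * (q + 2)! * (lam ^ 2 * x)) * Real.exp (-lam * x) :=
                mul_le_mul_of_nonneg_right key (Real.exp_pos _).le
            _ = 4 * (q + 2)! * (lam ^ 2 * x * Real.exp (-lam * x)) := by ring
      _ = 4 * (q + 2)! * (1 - Real.exp (-lam * h) * (1 + lam * h)) / lam ^ (q + 2) := by
          rw [intervalIntegral.integral_const_mul, ← lemB]
          ring
  · -- large λh
    push_neg at hcase
    set f : ℝ → ℝ := fun x => x ^ (q + 1) * Real.exp (-lam * x) with hf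
    have hfi : IntegrableOn f (Ioi 0) := by
      have h0 := integrableOn_rpow_mul_exp_neg_mul_rpow
        (p := 1) (s := ((q : ℝ) + 1))
        (by have : (0:ℝ) ≤ (q:ℝ) := Nat.cast_nonneg q; linarith) one_pos hlam
      apply h0.congr_fun _ measurableSet_Ioi
      intro x hx
      have hx0 : (0:ℝ) < x := hx
      simp only [hf, Real.rpow_one]
      rw [show ((q : ℝ) + 1) = ((q + 1 : ℕ) : ℝ) by push_cast; ring, Real.rpow_natCast]
    have hval : ∫ x in Ioi (0:ℝ), f x = (1 / lam) ^ (q + 2) * ((q + 1)! : ℝ) := by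
      have h0 := integral_rpow_mul_exp_neg_mul_Ioi (a := (q : ℝ) + 2) (by positivity) hlam
      have heq : ∀ x ∈ Ioi (0:ℝ), x ^ ((q : ℝ) + 2 - 1) * Real.exp (-(lam * x)) = f x := by
        intro x hx
        have hx0 : (0:ℝ) < x := hx
        rw [show ((q : ℝ) + 2 - 1) = ((q + 1 : ℕ) : ℝ) by push_cast; ring, Real.rpow_natCast]
        simp [hf, neg_mul]
      rw [setIntegral_congr_fun measurableSet_Ioi heq] at h0
      rw [h0]
      congr 1
      · rw [show ((q : ℝ) + 2) = ((q + 2 : ℕ) : ℝ) by push_cast; ring, Real.rpow_natCast]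
      · rw [show ((q : ℝ) + 2) = ((q + 1 : ℕ) : ℝ) + 1 by push_cast; ring]
        exact_mod_cast Real.Gamma_nat_eq_factorial (q + 1)
    have hmono : (∫ x in (0:ℝ)..h, f x) ≤ ∫ x in Ioi (0:ℝ), f x := by
      rw [intervalIntegral.integral_of_le hh.le]
      apply setIntegral_mono_set hfi
      · apply ae_restrict_of_forall_mem measurableSet_Ioi
        intro x hx
        have hx0 : (0:ℝ) ≤ x := le_of_lt hx
        exact mul_nonneg (pow_nonneg hx0 _) (Real.exp_pos _).le
      · exact (Ioc_subset_Ioi_self).eventuallyLE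
    have hLHS : (∫ x in (0:ℝ)..h, ((q + 2 : ℕ) : ℝ) * x ^ (q + 1) * Real.exp (-lam * x))
        ≤ ((q + 2)! : ℝ) / lam ^ (q + 2) := by
      have e1 : (∫ x in (0:ℝ)..h, ((q + 2 : ℕ) : ℝ) * x ^ (q + 1) * Real.exp (-lam * x))
          = ((q + 2 : ℕ) : ℝ) * ∫ x in (0:ℝ)..h, f x := by
        rw [← intervalIntegral.integral_const_mul]
        simp only [hf, mul_assoc]
      rw [e1]
      calc ((q + 2 : ℕ) : ℝ) * ∫ x in (0:ℝ)..h, f x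
          ≤ ((q + 2 : ℕ) : ℝ) * ((1 / lam) ^ (q + 2) * ((q + 1)! : ℝ)) := by
            rw [← hval]
            exact mul_le_mul_of_nonneg_left hmono (Nat.cast_nonneg _)
        _ = ((q + 2)! : ℝ) / lam ^ (q + 2) := by
            rw [div_pow, one_pow]
            rw [show ((q + 2)! : ℝ) = ((q + 2 : ℕ) : ℝ) * ((q + 1)! : ℝ) by
              rw [show (q + 2)! = (q + 2) * (q + 1)! from rfl]; push_cast; ring]
            ring
    -- lower bound for the RHS factor
    have hub0 : ∀ u : ℝ, 1 ≤ u → Real.exp (-u) * (1 + u) ≤ 2 * Real.exp (-1) := by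
      intro u hu1
      have h1 : u ≤ Real.exp (u - 1) := by
        have := Real.add_one_le_exp (u - 1); linarith
      have h2 : Real.exp (-u) * Real.exp (u - 1) = Real.exp (-1) := by
        rw [← Real.exp_add]; ring_nf
      have h3 : 1 + u ≤ 2 * Real.exp (u - 1) := by nlinarith [Real.exp_pos (u - 1)]
      calc Real.exp (-u) * (1 + u) ≤ Real.exp (-u) * (2 * Real.exp (u - 1)) :=
            mul_le_mul_of_nonneg_left h3 (Real.exp_pos _).le
        _ = 2 * Real.exp (-1) := by rw [← mul_assoc, mul_comm (Real.exp (-u)) 2, mul_assoc, h2]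
    have hub : Real.exp (-lam * h) * (1 + lam * h) ≤ 2 * Real.exp (-1) := by
      rw [neg_mul]
      exact hub0 _ hcase.le
    have hexp1 : Real.exp (-1) < 3 / 8 := by
      have h9 : (8:ℝ)/3 < Real.exp 1 := by
        have := Real.exp_one_gt_d9; norm_num at this ⊢; linarith
      rw [Real.exp_neg]
      have := inv_strictAnti₀ (by norm_num : (0:ℝ) < 8/3) h9
      calc (Real.exp 1)⁻¹ < ((8:ℝ)/3)⁻¹ := this
        _ = 3/8 := by norm_num
    have hquarter : (1:ℝ)/4 ≤ 1 - Real.exp (-lam * h) * (1 + lam * h) := by nlinarith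
    calc (∫ x in (0:ℝ)..h, ((q + 2 : ℕ) : ℝ) * x ^ (q + 1) * Real.exp (-lam * x))
        ≤ ((q + 2)! : ℝ) / lam ^ (q + 2) := hLHS
      _ = 4 * (q + 2)! * (1/4) / lam ^ (q + 2) := by ring
      _ ≤ 4 * (q + 2)! * (1 - Real.exp (-lam * h) * (1 + lam * h)) / lam ^ (q + 2) := by
          gcongr
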